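/- arXiv:1109.1763 — 2 statements merged into one kernel-verified Lean document; each statement's English description precedes it below -/
import Mathlib

section
/- Let {ε_1, …, ε_n} and {β_1, …, β_n} be two orthonormal bases of ℂⁿ. On the real vector space of Hermitian n×n complex matrices, consider the real-linear functionals L_i(ρ) = tr(ρ |ε_i⟩⟨ε_i|) and M_i(ρ) = tr(ρ |β_i⟩⟨β_i|) for i = 1, …, n. Suppose the dimension of the real span of {L_1, …, L_n, M_1, …, M_n} equals n + 1 (exactly one more than the dimension n of the span of {L_1, …, L_n}). Then there exist indices r ≠ s and j ≠ k such that β_r and β_s lie in the two-dimensional complex subspace spanned by ε_j and ε_k, all four inner products ⟨ε_j, β_r⟩, ⟨ε_k, β_r⟩, ⟨ε_j, β_s⟩, ⟨ε_k, β_s⟩ are nonzero, and the remaining vectors {β_l : l ≠ r, s} coincide, up to multiplication by complex scalars of modulus 1, with a permutation of {ε_l : l ≠ j, k}. -/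
/-!
Since `tr (M M) = ‖M‖²` for Hermitian `M`, the functionals `ρ ↦ tr (ρ P)` span a space of the
same dimension as the projections `P` themselves. Let `γ i` be the coordinates of `β i` in the
basis `ε`. In these coordinates the projections onto the `ε i` are the diagonal matrix units,
spanning dimension `n`, so the off-diagonal parts of the `|γ i⟩⟨γ i|` span a line: they are
`t i • O` with `O ≠ 0` (otherwise every `β i` would be a unimodular multiple of some `ε p`) and
`∑ t i = 0` because `∑ |γ i⟩⟨γ i| = 1`. Comparing the entries `γ_j γ̄_k = t O_jk` of a vector with
`t > 0` and of one with `t < 0` confines both to the two coordinates `j, k` of a nonzero entry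
of `O`. A third vector with `t ≠ 0` would be a third nonzero vector in that plane orthogonal to
both, and the vectors with `t = 0` are unimodular multiples of the remaining basis vectors.
-/

open Matrix

/-- The rank-one orthogonal projection `|v⟩⟨v|` onto the line spanned by `v`. -/
def proj {n : ℕ} (v : Fin n → ℂ) : Matrix (Fin n) (Fin n) ℂ :=
  Matrix.vecMulVec v (star v)

/-- The real-linear functional `ρ ↦ tr(ρ P)` on the real vector space of Hermitian
`n × n` complex matrices (for Hermitian `P` the trace is real, so we take its real
part). -/
noncomputable def measFun {n : ℕ} (P : Matrix (Fin n) (Fin n) ℂ) :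
    selfAdjoint (Matrix (Fin n) (Fin n) ℂ) →ₗ[ℝ] ℝ where
  toFun ρ := ((ρ : Matrix (Fin n) (Fin n) ℂ) * P).trace.re
  map_add' ρ σ := by
    simp [add_mul, Matrix.trace_add]
  map_smul' r ρ := by
    simp [Matrix.smul_mul, Matrix.trace_smul, Complex.real_smul]

open Module

section LinearAlgebra

variable {K V W : Type*} [DivisionRing K] [AddCommGroup V] [Module K V] [AddCommGroup W]
  [Module K W]

lemma finrank_map_add_finrank_le_of_le_ker {f : V →ₗ[K] W} {D S : Submodule K V}
    [FiniteDimensional K S] (hDS : D ≤ S) (hDf : D ≤ LinearMap.ker f) :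
    finrank K (S.map f) + finrank K D ≤ finrank K S := by
  have hD : finrank K D ≤ finrank K (LinearMap.ker (f.domRestrict S)) := by
    rw [← (Submodule.comapSubtypeEquivOfLe hDS).finrank_eq]
    exact Submodule.finrank_mono fun x hx => hDf hx
  rw [← LinearMap.range_domRestrict, ← LinearMap.finrank_range_add_finrank_ker (f.domRestrict S)]
  omega

lemma exists_smul_eq_of_finrank_span_le_one {ι : Type*} [Finite ι] {v : ι → V}
    (h : finrank K (Submodule.span K (Set.range v)) ≤ 1) {i₀ : ι} (hi₀ : v i₀ ≠ 0) (i : ι) :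
    ∃ t : K, v i = t • v i₀ := by
  have := FiniteDimensional.span_of_finite K (Set.finite_range v)
  have hspan : Submodule.span K {v i₀} = Submodule.span K (Set.range v) :=
    Submodule.eq_of_le_of_finrank_le
      (Submodule.span_le.mpr (Set.singleton_subset_iff.mpr
        (Submodule.subset_span (Set.mem_range_self i₀))))
      (by rwa [finrank_span_singleton hi₀])
  have hi : v i ∈ Submodule.span K {v i₀} := hspan ▸ Submodule.subset_span (Set.mem_range_self i)
  obtain ⟨t, ht⟩ := Submodule.mem_span_singleton.mp hi
  exact ⟨t, ht.symm⟩

end LinearAlgebra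

lemma card_subtype_ne_and_ne {ι : Type*} [Fintype ι] [DecidableEq ι] {a b : ι} (hab : a ≠ b) :
    Fintype.card {l : ι // l ≠ a ∧ l ≠ b} = Fintype.card ι - 2 := by
  rw [Fintype.card_subtype, ← Finset.card_pair hab, ← Finset.card_compl]
  congr 1
  ext l
  simp

section Proj

variable {n : ℕ}

lemma proj_apply (v : Fin n → ℂ) (j k : Fin n) : proj v j k = v j * star (v k) := rfl

lemma isSelfAdjoint_proj (v : Fin n → ℂ) : IsSelfAdjoint (proj v) := by
  rw [IsSelfAdjoint, proj, star_eq_conjTranspose, conjTranspose_vecMulVec, star_star]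

lemma proj_mulVec (v w : Fin n → ℂ) : proj v *ᵥ w = (star v ⬝ᵥ w) • v := by
  ext i
  simp [proj, vecMulVec_mulVec, mul_comm]

lemma mul_proj_mul_conjTranspose (A : Matrix (Fin n) (Fin n) ℂ) (v : Fin n → ℂ) :
    A * proj v * Aᴴ = proj (A *ᵥ v) := by
  rw [proj, proj, mul_vecMulVec, vecMulVec_mul, star_mulVec]

lemma proj_smul_of_norm_eq_one {c : ℂ} (hc : ‖c‖ = 1) (v : Fin n → ℂ) :
    proj (c • v) = proj v := by
  have hc' : c * star c = 1 := by simpa [hc] using Complex.mul_conj' c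
  ext j k
  simp only [proj_apply, Pi.smul_apply, smul_eq_mul, star_mul']
  linear_combination (v j * star (v k)) * hc'

end Proj

section CoordMatrix

variable {ι : Type*} [Fintype ι]

def coordMatrix (ε : ι → ι → ℂ) : Matrix ι ι ℂ := of fun i => star (ε i)

variable [DecidableEq ι]

lemma coordMatrix_mem_unitaryGroup_iff {ε : ι → ι → ℂ} :
    coordMatrix ε ∈ unitaryGroup ι ℂ ↔ ∀ i j, star (ε i) ⬝ᵥ ε j = if i = j then 1 else 0 := by
  rw [mem_unitaryGroup_iff, ← Matrix.ext_iff]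
  refine forall₂_congr fun i j => ?_
  simp [coordMatrix, mul_apply, one_apply, dotProduct]

lemma conjTranspose_coordMatrix_mulVec_single (ε : ι → ι → ℂ) (i : ι) :
    (coordMatrix ε)ᴴ *ᵥ Pi.single i 1 = ε i := by
  ext m
  simp [coordMatrix]

variable {ε : ι → ι → ℂ}

lemma coordMatrix_mulVec_self (hε : coordMatrix ε ∈ unitaryGroup ι ℂ) (i : ι) :
    coordMatrix ε *ᵥ ε i = Pi.single i 1 := by
  rw [← conjTranspose_coordMatrix_mulVec_single ε i, mulVec_mulVec, ← star_eq_conjTranspose,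
    mem_unitaryGroup_iff.mp hε, one_mulVec]

lemma star_mulVec_dotProduct_mulVec_of_mem_unitaryGroup {U : Matrix ι ι ℂ}
    (hU : U ∈ unitaryGroup ι ℂ) (v w : ι → ℂ) :
    star (U *ᵥ v) ⬝ᵥ (U *ᵥ w) = star v ⬝ᵥ w := by
  rw [star_mulVec, dotProduct_mulVec, vecMul_vecMul, ← star_eq_conjTranspose,
    mem_unitaryGroup_iff'.mp hU, vecMul_one]

lemma eq_smul_of_coordMatrix_mulVec_eq (hε : coordMatrix ε ∈ unitaryGroup ι ℂ) {v : ι → ℂ}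
    {c : ℂ} {p : ι} (h : coordMatrix ε *ᵥ v = c • Pi.single p 1) : v = c • ε p := by
  have hp := conjTranspose_coordMatrix_mulVec_single ε p
  rw [← hp, ← mulVec_smul, ← h, mulVec_mulVec,
    ← star_eq_conjTranspose, mem_unitaryGroup_iff'.mp hε, one_mulVec]

end CoordMatrix

section Orthonormal

variable {n : ℕ} {ε : Fin n → Fin n → ℂ}

lemma sum_proj_eq_one (hε : coordMatrix ε ∈ unitaryGroup (Fin n) ℂ) : ∑ i, proj (ε i) = 1 := by
  rw [← mem_unitaryGroup_iff'.mp hε]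
  ext j k
  simp [coordMatrix, proj_apply, mul_apply, Matrix.sum_apply]

lemma linearIndependent_proj (hε : coordMatrix ε ∈ unitaryGroup (Fin n) ℂ) :
    LinearIndependent ℝ fun i => proj (ε i) := by
  rw [Fintype.linearIndependent_iff]
  intro g hg j
  have hj := congrArg (fun M => (coordMatrix ε *ᵥ (M *ᵥ ε j)) j) hg
  simpa [sum_mulVec, smul_mulVec, proj_mulVec, coordMatrix_mem_unitaryGroup_iff.mp hε,
    mulVec_smul, coordMatrix_mulVec_self hε] using hj

end Orthonormal

section MeasFun

variable {n : ℕ}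

noncomputable def measFunₗ :
    Matrix (Fin n) (Fin n) ℂ →ₗ[ℝ] selfAdjoint (Matrix (Fin n) (Fin n) ℂ) →ₗ[ℝ] ℝ where
  toFun := measFun
  map_add' P Q := by
    ext ρ
    simp [measFun, mul_add, trace_add]
  map_smul' r P := by
    ext ρ
    simp [measFun, trace_smul, Complex.real_smul]

open scoped ComplexOrder in
/-- `measFun M` evaluated at `M` itself is `tr (Mᴴ M) ≥ 0`, which vanishes only for `M = 0`. -/
lemma eq_zero_of_measFun_eq_zero {M : Matrix (Fin n) (Fin n) ℂ} (hM : IsSelfAdjoint M)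
    (h : measFun M = 0) : M = 0 := by
  have hre : (Mᴴ * M).trace.re = 0 := by
    simpa [measFun, ← star_eq_conjTranspose, hM.star_eq] using LinearMap.congr_fun h ⟨M, hM⟩
  have hnonneg := (posSemidef_conjTranspose_mul_self M).trace_nonneg
  exact trace_conjTranspose_mul_self_eq_zero_iff.mp
    (Complex.ext hre (Complex.nonneg_iff.mp hnonneg).2.symm)

lemma finrank_span_image_measFunₗ {s : Set (Matrix (Fin n) (Fin n) ℂ)}
    (hs : ∀ M ∈ s, IsSelfAdjoint M) :
    finrank ℝ (Submodule.span ℝ (measFunₗ '' s)) = finrank ℝ (Submodule.span ℝ s) := by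
  have hsa : Submodule.span ℝ s ≤ selfAdjoint.submodule ℝ (Matrix (Fin n) (Fin n) ℂ) :=
    Submodule.span_le.mpr hs
  have hinj : Function.Injective (measFunₗ.domRestrict (Submodule.span ℝ s)) := by
    refine LinearMap.injective_domRestrict_iff.mpr (Submodule.disjoint_def.mpr fun M hM hker => ?_)
    exact eq_zero_of_measFun_eq_zero (hsa hM) hker
  rw [Submodule.span_image, ← LinearMap.range_domRestrict, LinearMap.finrank_range_of_inj hinj]

end MeasFun

section OffDiag

variable {ι : Type*} [DecidableEq ι] (R : Type*) {α : Type*} [Semiring R] [AddCommMonoid α]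
  [Module R α]

def offDiag : Matrix ι ι α →ₗ[R] Matrix ι ι α where
  toFun M := of fun j k => if j = k then 0 else M j k
  map_add' M N := by
    ext j k
    by_cases h : j = k <;> simp [h]
  map_smul' r M := by
    ext j k
    by_cases h : j = k <;> simp [h]

variable {R}

lemma offDiag_apply_of_ne (M : Matrix ι ι α) {j k : ι} (hjk : j ≠ k) :
    offDiag R M j k = M j k := if_neg hjk

lemma offDiag_eq_zero_iff {M : Matrix ι ι α} :
    offDiag R M = 0 ↔ ∀ j k, j ≠ k → M j k = 0 := by
  simp [offDiag, ← Matrix.ext_iff]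

lemma offDiag_one [One α] : offDiag R (1 : Matrix ι ι α) = 0 :=
  offDiag_eq_zero_iff.mpr fun _ _ hjk => one_apply_ne hjk

end OffDiag

section OffDiagProj

variable {n : ℕ}

lemma offDiag_proj_apply_of_ne (v : Fin n → ℂ) {j k : Fin n} (hjk : j ≠ k) :
    offDiag ℝ (proj v) j k = v j * star (v k) := offDiag_apply_of_ne _ hjk

lemma offDiag_proj_single (i : Fin n) : offDiag ℝ (proj (Pi.single i 1)) = 0 := by
  refine offDiag_eq_zero_iff.mpr fun j k hjk => ?_
  rcases eq_or_ne j i with rfl | h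
  · simp [proj_apply, Ne.symm hjk]
  · simp [proj_apply, h]

end OffDiagProj

section Vectors

variable {n : ℕ}

lemma star_smul_single_dotProduct (c : ℂ) (p : Fin n) (w : Fin n → ℂ) :
    star (c • Pi.single p 1 : Fin n → ℂ) ⬝ᵥ w = star c * w p := by
  simp [star_smul, single_dotProduct]

lemma exists_eq_smul_single_of_offDiag_proj_eq_zero {v : Fin n → ℂ} (hv : star v ⬝ᵥ v = 1)
    (h : offDiag ℝ (proj v) = 0) : ∃ p, ∃ c : ℂ, ‖c‖ = 1 ∧ v = c • Pi.single p 1 := by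
  obtain ⟨p, hp⟩ : ∃ p, v p ≠ 0 := by
    by_contra! h0
    simp [dotProduct, h0] at hv
  have hv_eq : v = v p • Pi.single p 1 := by
    ext m
    rcases eq_or_ne m p with rfl | hm
    · simp
    · have hpm := offDiag_proj_apply_of_ne v hm.symm
      rw [h] at hpm
      simpa [hm, hp] using hpm.symm
  refine ⟨p, v p, ?_, hv_eq⟩
  rw [hv_eq, star_smul_single_dotProduct] at hv
  simp only [Pi.smul_apply, Pi.single_eq_same, smul_eq_mul, mul_one, RCLike.star_def,
    Complex.conj_mul'] at hv
  have : ‖v p‖ ^ 2 = 1 := by exact_mod_cast hv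
  exact (pow_eq_one_iff_of_nonneg (norm_nonneg _) two_ne_zero).mp this

lemma dotProduct_eq_of_support_pair {j k : Fin n} (hjk : j ≠ k) {v : Fin n → ℂ}
    (hv : ∀ m, m ≠ j → m ≠ k → v m = 0) (w : Fin n → ℂ) :
    star v ⬝ᵥ w = star (v j) * w j + star (v k) * w k :=
  Fintype.sum_eq_add j k hjk fun m hm => by simp [hv m hm.1 hm.2]

lemma mul_star_eq_of_offDiag_proj_eq_smul {x y : Fin n → ℂ} {t : ℝ}
    (h : offDiag ℝ (proj x) = t • offDiag ℝ (proj y)) {j k : Fin n} (hjk : j ≠ k) :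
    x j * star (x k) = t * (y j * star (y k)) := by
  simpa [offDiag_proj_apply_of_ne _ hjk, Complex.real_smul] using congrFun₂ h j k

/-- Comparing `|x_m|² x_j x̄_k = (x_j x̄_m)(x_m x̄_k)` with the same identity for `y` gives
`|x_m|² = t |y_m|²`, impossible for `t < 0` unless `y_m = 0`. -/
lemma apply_eq_zero_of_offDiag_proj_eq_smul_of_neg {x y : Fin n → ℂ} {t : ℝ}
    (h : offDiag ℝ (proj x) = t • offDiag ℝ (proj y)) (ht : t < 0) {j k m : Fin n}
    (hjk : j ≠ k) (hmj : m ≠ j) (hmk : m ≠ k) (hy : y j * star (y k) ≠ 0) : y m = 0 := by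
  have rel := fun {a b : Fin n} (hab : a ≠ b) => mul_star_eq_of_offDiag_proj_eq_smul h hab
  have nx : x m * star (x m) = (‖x m‖ : ℂ) ^ 2 := Complex.mul_conj' _
  have ny : y m * star (y m) = (‖y m‖ : ℂ) ^ 2 := Complex.mul_conj' _
  have key : ((‖x m‖ ^ 2 * t : ℝ) : ℂ) * (y j * star (y k))
      = ((t ^ 2 * ‖y m‖ ^ 2 : ℝ) : ℂ) * (y j * star (y k)) := by
    push_cast
    linear_combination (-(‖x m‖ : ℂ) ^ 2) * rel hjk - x j * star (x k) * nx
      + x m * star (x k) * rel hmj.symm + t * (y j * star (y m)) * rel hmk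
      + t ^ 2 * (y j * star (y k)) * ny
  have key' : ‖x m‖ ^ 2 * t = t ^ 2 * ‖y m‖ ^ 2 := by exact_mod_cast mul_right_cancel₀ hy key
  have : ‖y m‖ ^ 2 = 0 := by
    nlinarith [sq_nonneg ‖x m‖, sq_nonneg ‖y m‖, pow_pos (neg_pos.mpr ht) 2]
  simpa using this

lemma support_of_offDiag_proj_eq_smul {x y : Fin n → ℂ} {t : ℝ}
    (h : offDiag ℝ (proj x) = t • offDiag ℝ (proj y)) (ht : t ≠ 0) {j k : Fin n} (hjk : j ≠ k)
    (hy : ∀ m, m ≠ j → m ≠ k → y m = 0) (hyjk : y j * star (y k) ≠ 0) :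
    (∀ m, m ≠ j → m ≠ k → x m = 0) ∧ x j ≠ 0 ∧ x k ≠ 0 := by
  have hx : x j * star (x k) ≠ 0 := by
    rw [mul_star_eq_of_offDiag_proj_eq_smul h hjk]
    exact mul_ne_zero (Complex.ofReal_ne_zero.mpr ht) hyjk
  obtain ⟨hxj, hxk⟩ := mul_ne_zero_iff.mp hx
  refine ⟨fun m hmj hmk => ?_, hxj, star_ne_zero.mp hxk⟩
  have hm := mul_star_eq_of_offDiag_proj_eq_smul h hmk
  rw [hy m hmj hmk, zero_mul, mul_zero] at hm
  exact (mul_eq_zero.mp hm).resolve_right hxk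

/-- The vectors orthogonal to `u ≠ 0` in the plane of coordinates `j, k` form a line, so `w`,
orthogonal to `u` and to `v ≠ 0` on that line, vanishes there. -/
lemma apply_eq_zero_of_orthogonal_of_support_pair {j k : Fin n} (hjk : j ≠ k) {u v w : Fin n → ℂ}
    (hu : ∀ m, m ≠ j → m ≠ k → u m = 0) (hv : ∀ m, m ≠ j → m ≠ k → v m = 0)
    (huv : star u ⬝ᵥ v = 0) (huw : star u ⬝ᵥ w = 0) (hvw : star v ⬝ᵥ w = 0)
    (huj : u j ≠ 0) (hvk : v k ≠ 0) : w k = 0 := by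
  rw [dotProduct_eq_of_support_pair hjk hu] at huv huw
  rw [dotProduct_eq_of_support_pair hjk hv] at hvw
  have hvu : u j * star (v j) + u k * star (v k) = 0 := by
    simpa using congrArg star huv
  have hnorm : u j * star (u j) + u k * star (u k) ≠ 0 := by
    have hsq : ∀ z : ℂ, z * star z = (‖z‖ : ℂ) ^ 2 := Complex.mul_conj'
    rw [hsq, hsq]
    have : (0 : ℝ) < ‖u j‖ ^ 2 + ‖u k‖ ^ 2 :=
      add_pos_of_pos_of_nonneg (pow_pos (norm_pos_iff.mpr huj) 2) (sq_nonneg _)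
    exact_mod_cast this.ne'
  have h : (u j * star (u j) + u k * star (u k)) * (star (v k) * w k) = 0 := by
    linear_combination (-star (u j) * w j) * hvu + (u k * star (v k)) * huw
      + (u j * star (u j)) * hvw
  exact ((mul_eq_zero.mp ((mul_eq_zero.mp h).resolve_left hnorm)).resolve_left
    (star_ne_zero.mpr hvk))

end Vectors

section Core

variable {n : ℕ}

lemma exists_equiv_of_eq_smul_single {γ : Fin n → Fin n → ℂ}
    (hγ : ∀ i j, star (γ i) ⬝ᵥ γ j = if i = j then 1 else 0) {r s j k : Fin n} (hrs : r ≠ s)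
    (hjk : j ≠ k) (hrj : γ r j ≠ 0) (hrk : γ r k ≠ 0)
    (h : ∀ l : {l : Fin n // l ≠ r ∧ l ≠ s}, ∃ p, ∃ c : ℂ, ‖c‖ = 1 ∧ γ l = c • Pi.single p 1) :
    ∃ σ : {l : Fin n // l ≠ r ∧ l ≠ s} ≃ {l : Fin n // l ≠ j ∧ l ≠ k},
      ∀ l, ∃ c : ℂ, ‖c‖ = 1 ∧ γ l.1 = c • Pi.single (σ l).1 1 := by
  choose p c hc hγl using h
  have hc₀ : ∀ l, star (c l) ≠ 0 := fun l h₀ => by simpa [star_eq_zero.mp h₀] using hc l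
  have horth : ∀ l i, i ≠ l.1 → γ i (p l) = 0 := fun l i hi =>
    (mul_eq_zero.mp <| by
      rw [← star_smul_single_dotProduct, ← hγl, hγ, if_neg hi.symm]).resolve_left (hc₀ l)
  have hp : ∀ l, p l ≠ j ∧ p l ≠ k := fun l =>
    ⟨fun h => hrj (h ▸ horth l r l.2.1.symm), fun h => hrk (h ▸ horth l r l.2.1.symm)⟩
  let F : {l : Fin n // l ≠ r ∧ l ≠ s} → {l : Fin n // l ≠ j ∧ l ≠ k} := fun l => ⟨p l, hp l⟩
  have hF : Function.Injective F := by
    intro l l' hll'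
    by_contra hne
    have h := horth l' l (fun h => hne (Subtype.ext h))
    rw [hγl l, show p l' = p l from congrArg Subtype.val hll'.symm] at h
    simp [star_ne_zero.mp (hc₀ l)] at h
  have hcard : Fintype.card {l : Fin n // l ≠ r ∧ l ≠ s}
      = Fintype.card {l : Fin n // l ≠ j ∧ l ≠ k} := by
    rw [card_subtype_ne_and_ne hrs, card_subtype_ne_and_ne hjk]
  exact ⟨Equiv.ofBijective F ((Fintype.bijective_iff_injective_and_card F).mpr ⟨hF, hcard⟩),
    fun l => ⟨c l, hc l, hγl l⟩⟩

lemma sum_eq_zero_of_offDiag_proj_eq_smul {γ : Fin n → Fin n → ℂ}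
    (hγ : coordMatrix γ ∈ unitaryGroup (Fin n) ℂ) {O : Matrix (Fin n) (Fin n) ℂ} (hO : O ≠ 0)
    {t : Fin n → ℝ} (ht : ∀ i, offDiag ℝ (proj (γ i)) = t i • O) : ∑ i, t i = 0 := by
  refine smul_left_injective ℝ hO ?_
  calc (∑ i, t i) • O = offDiag ℝ (∑ i, proj (γ i)) := by
        rw [map_sum, Finset.sum_smul]
        exact Finset.sum_congr rfl fun i _ => (ht i).symm
    _ = (0 : ℝ) • O := by rw [sum_proj_eq_one hγ, offDiag_one, zero_smul]

theorem exists_pair_of_offDiag_proj_eq_smul {γ : Fin n → Fin n → ℂ}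
    (hγ : coordMatrix γ ∈ unitaryGroup (Fin n) ℂ) {i₀ : Fin n} {t : Fin n → ℝ}
    (hO : offDiag ℝ (proj (γ i₀)) ≠ 0)
    (ht : ∀ i, offDiag ℝ (proj (γ i)) = t i • offDiag ℝ (proj (γ i₀))) :
    ∃ r s : Fin n, r ≠ s ∧ ∃ j k : Fin n, j ≠ k ∧
      (∀ m, m ≠ j → m ≠ k → γ r m = 0) ∧ (∀ m, m ≠ j → m ≠ k → γ s m = 0) ∧
      γ r j ≠ 0 ∧ γ r k ≠ 0 ∧ γ s j ≠ 0 ∧ γ s k ≠ 0 ∧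
      ∃ σ : {l : Fin n // l ≠ r ∧ l ≠ s} ≃ {l : Fin n // l ≠ j ∧ l ≠ k},
        ∀ l, ∃ c : ℂ, ‖c‖ = 1 ∧ γ l.1 = c • Pi.single (σ l).1 1 := by
  have hγ' := coordMatrix_mem_unitaryGroup_iff.mp hγ
  have ht₀ : t i₀ = 1 := smul_left_injective ℝ hO ((ht i₀).symm.trans (one_smul ℝ _).symm)
  have hsum := sum_eq_zero_of_offDiag_proj_eq_smul hγ hO ht
  obtain ⟨i₁, hi₁⟩ : ∃ i₁, t i₁ < 0 := by
    by_contra! hpos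
    have := Finset.single_le_sum (fun i _ => hpos i) (Finset.mem_univ i₀)
    linarith
  have hi₀₁ : i₀ ≠ i₁ := by rintro rfl; linarith
  obtain ⟨j, k, hjk, hjk₀⟩ : ∃ j k, j ≠ k ∧ γ i₀ j * star (γ i₀ k) ≠ 0 := by
    by_contra! h
    exact hO (offDiag_eq_zero_iff.mpr h)
  have hsupp₀ : ∀ m, m ≠ j → m ≠ k → γ i₀ m = 0 := fun m hmj hmk =>
    apply_eq_zero_of_offDiag_proj_eq_smul_of_neg (ht i₁) hi₁ hjk hmj hmk hjk₀
  have hsupp : ∀ i, t i ≠ 0 → (∀ m, m ≠ j → m ≠ k → γ i m = 0) ∧ γ i j ≠ 0 ∧ γ i k ≠ 0 :=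
    fun i hti => support_of_offDiag_proj_eq_smul (ht i) hti hjk hsupp₀ hjk₀
  obtain ⟨hr, hrj, hrk⟩ := hsupp i₀ (by simp [ht₀])
  obtain ⟨hs, hsj, hsk⟩ := hsupp i₁ hi₁.ne
  have hzero : ∀ l, l ≠ i₀ → l ≠ i₁ → t l = 0 := by
    intro l hl₀ hl₁
    by_contra htl
    refine (hsupp l htl).2.2
      (apply_eq_zero_of_orthogonal_of_support_pair hjk hr hs ?_ ?_ ?_ hrj hsk)
    · simpa [hi₀₁] using hγ' i₀ i₁
    · simpa [hl₀.symm] using hγ' i₀ l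
    · simpa [hl₁.symm] using hγ' i₁ l
  refine ⟨i₀, i₁, hi₀₁, j, k, hjk, hr, hs, hrj, hrk, hsj, hsk,
    exists_equiv_of_eq_smul_single hγ' hi₀₁ hjk hrj hrk fun l => ?_⟩
  refine exists_eq_smul_single_of_offDiag_proj_eq_zero (by simpa using hγ' l l) ?_
  rw [ht l, hzero l l.2.1 l.2.2, zero_smul]

end Core


section Rank

open Submodule

variable {n : ℕ} {ε : Fin n → Fin n → ℂ}

lemma finrank_span_proj (hε : coordMatrix ε ∈ unitaryGroup (Fin n) ℂ) :
    finrank ℝ (span ℝ (Set.range fun i => proj (ε i))) = n := by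
  rw [finrank_span_eq_card (linearIndependent_proj hε), Fintype.card_fin]

lemma mem_span_pair_of_coordMatrix_mulVec (hε : coordMatrix ε ∈ unitaryGroup (Fin n) ℂ)
    {j k : Fin n} (hjk : j ≠ k) {v : Fin n → ℂ}
    (hv : ∀ m, m ≠ j → m ≠ k → (coordMatrix ε *ᵥ v) m = 0) :
    v ∈ span ℂ ({ε j, ε k} : Set (Fin n → ℂ)) := by
  set x := coordMatrix ε *ᵥ v
  have hx : x = x j • Pi.single j 1 + x k • Pi.single k 1 := by
    ext m
    rcases eq_or_ne m j with rfl | hmj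
    · simp [hjk]
    rcases eq_or_ne m k with rfl | hmk
    · simp [hmj]
    · simp [hv m hmj hmk, hmj, hmk]
  have hv_eq : v = x j • ε j + x k • ε k := by
    rw [← conjTranspose_coordMatrix_mulVec_single ε j,
      ← conjTranspose_coordMatrix_mulVec_single ε k, ← mulVec_smul, ← mulVec_smul,
      ← mulVec_add, ← hx, mulVec_mulVec, ← star_eq_conjTranspose,
      mem_unitaryGroup_iff'.mp hε, one_mulVec]
  rw [hv_eq]
  exact add_mem (smul_mem _ _ (subset_span (by simp))) (smul_mem _ _ (subset_span (by simp)))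

/-- After the unitary change of coordinates `coordMatrix ε`, `offDiag` kills the `n`-dimensional
span of the projections onto the `ε i`, so it leaves at most one of the `n + 1` dimensions. -/
lemma finrank_span_offDiag_proj_le_one (hε : coordMatrix ε ∈ unitaryGroup (Fin n) ℂ)
    {β : Fin n → Fin n → ℂ}
    (hS : finrank ℝ (span ℝ (Set.range (fun i => proj (ε i)) ∪ Set.range fun i => proj (β i)))
      ≤ n + 1) :
    finrank ℝ (span ℝ (Set.range fun i => offDiag ℝ (proj (coordMatrix ε *ᵥ β i)))) ≤ 1 := by
  set D := span ℝ (Set.range fun i => proj (ε i))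
  set S := span ℝ (Set.range (fun i => proj (ε i)) ∪ Set.range fun i => proj (β i))
  set f := offDiag ℝ ∘ₗ LinearMap.mulLeft ℝ (coordMatrix ε) ∘ₗ
    LinearMap.mulRight ℝ (coordMatrix ε)ᴴ
  have hf : ∀ v, f (proj v) = offDiag ℝ (proj (coordMatrix ε *ᵥ v)) := fun v => by
    simp [f, ← mul_assoc, mul_proj_mul_conjTranspose]
  have hDf : D ≤ LinearMap.ker f := span_le.mpr <| Set.range_subset_iff.mpr fun i => by
    simp [hf, coordMatrix_mulVec_self hε, offDiag_proj_single]
  have hmap := finrank_map_add_finrank_le_of_le_ker (S := S) (span_mono Set.subset_union_left) hDf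
  rw [finrank_span_proj hε] at hmap
  calc _ ≤ finrank ℝ (S.map f) := by
        refine finrank_mono (span_le.mpr (Set.range_subset_iff.mpr fun i => ?_))
        exact ⟨proj (β i), subset_span (Or.inr ⟨i, rfl⟩), hf _⟩
    _ ≤ 1 := by omega

lemma exists_offDiag_proj_ne_zero (hε : coordMatrix ε ∈ unitaryGroup (Fin n) ℂ)
    {β : Fin n → Fin n → ℂ} (hβ : ∀ i, star (β i) ⬝ᵥ β i = 1)
    (hS : n < finrank ℝ
      (span ℝ (Set.range (fun i => proj (ε i)) ∪ Set.range fun i => proj (β i)))) :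
    ∃ i, offDiag ℝ (proj (coordMatrix ε *ᵥ β i)) ≠ 0 := by
  by_contra! h
  have hβD : ∀ i, proj (β i) ∈ span ℝ (Set.range fun i => proj (ε i)) := by
    intro i
    obtain ⟨p, c, hc, hp⟩ := exists_eq_smul_single_of_offDiag_proj_eq_zero
      ((star_mulVec_dotProduct_mulVec_of_mem_unitaryGroup hε _ _).trans (hβ i)) (h i)
    rw [eq_smul_of_coordMatrix_mulVec_eq hε hp, proj_smul_of_norm_eq_one hc]
    exact subset_span ⟨p, rfl⟩
  have hSD := finrank_mono
    (span_le.mpr (Set.union_subset subset_span (Set.range_subset_iff.mpr hβD)))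
  rw [finrank_span_proj hε] at hSD
  omega

end Rank

/-- If the real span of the measurement functionals of two orthonormal bases
`ε` and `β` of `ℂⁿ` has dimension exactly `n + 1` (one more than that of a single
basis), then two of the `β`-vectors lie in the complex plane spanned by two of the
`ε`-vectors with all four mutual inner products nonzero, and the remaining
`β`-vectors agree, up to unimodular scalars, with a permutation of the remaining
`ε`-vectors. -/
theorem rank_increment_one_structure {n : ℕ} (ε β : Fin n → (Fin n → ℂ))
    (hε : ∀ i j, dotProduct (star (ε i)) (ε j) = if i = j then 1 else 0)
    (hβ : ∀ i j, dotProduct (star (β i)) (β j) = if i = j then 1 else 0)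
    (hrank : Module.finrank ℝ
      ↥(Submodule.span ℝ
        (Set.range (fun i => measFun (proj (ε i))) ∪
          Set.range (fun i => measFun (proj (β i))))) = n + 1) :
    ∃ r s : Fin n, r ≠ s ∧ ∃ j k : Fin n, j ≠ k ∧
      β r ∈ Submodule.span ℂ ({ε j, ε k} : Set (Fin n → ℂ)) ∧
      β s ∈ Submodule.span ℂ ({ε j, ε k} : Set (Fin n → ℂ)) ∧
      dotProduct (star (ε j)) (β r) ≠ 0 ∧
      dotProduct (star (ε k)) (β r) ≠ 0 ∧
      dotProduct (star (ε j)) (β s) ≠ 0 ∧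
      dotProduct (star (ε k)) (β s) ≠ 0 ∧
      ∃ σ : {l : Fin n // l ≠ r ∧ l ≠ s} ≃ {l : Fin n // l ≠ j ∧ l ≠ k},
        ∀ l : {l : Fin n // l ≠ r ∧ l ≠ s},
          ∃ c : ℂ, ‖c‖ = 1 ∧ β l.1 = c • ε (σ l).1 := by
  have hW := coordMatrix_mem_unitaryGroup_iff.mpr hε
  have hS : finrank ℝ (Submodule.span ℝ
      (Set.range (fun i => proj (ε i)) ∪ Set.range fun i => proj (β i))) = n + 1 := by
    rw [← finrank_span_image_measFunₗ, Set.image_union, ← Set.range_comp, ← Set.range_comp]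
    · exact hrank
    · rintro _ (⟨i, rfl⟩ | ⟨i, rfl⟩) <;> exact isSelfAdjoint_proj _
  have hγ : coordMatrix (fun i => coordMatrix ε *ᵥ β i) ∈ unitaryGroup (Fin n) ℂ :=
    coordMatrix_mem_unitaryGroup_iff.mpr fun i j =>
      (star_mulVec_dotProduct_mulVec_of_mem_unitaryGroup hW _ _).trans (hβ i j)
  obtain ⟨i₀, hO⟩ := exists_offDiag_proj_ne_zero hW (fun i => by simpa using hβ i i) (by omega)
  choose t ht using
    exists_smul_eq_of_finrank_span_le_one (finrank_span_offDiag_proj_le_one hW hS.le) hO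
  obtain ⟨r, s, hrs, j, k, hjk, hr, hs, hrj, hrk, hsj, hsk, σ, hσ⟩ :=
    exists_pair_of_offDiag_proj_eq_smul hγ hO ht
  refine ⟨r, s, hrs, j, k, hjk, mem_span_pair_of_coordMatrix_mulVec hW hjk hr,
    mem_span_pair_of_coordMatrix_mulVec hW hjk hs, hrj, hrk, hsj, hsk, σ, fun l => ?_⟩
  obtain ⟨c, hc, hl⟩ := hσ l
  exact ⟨c, hc, eq_smul_of_coordMatrix_mulVec_eq hW hl⟩
end

section
/- There exists a quantum probability assignment F on ℂ² of size 4 such that every subset of F of size 3 is consistent, but F itself is not consistent. Consequently the consistency number of a 2-dimensional quantum system equals 4. -/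
/-!
Every qubit density matrix is `(1 + r • σ) / 2` for a vector `r` in the closed unit ball of `ℝ³`
(positivity amounts to `det = (1 - ‖r‖²) / 4 ≥ 0`), and `tr (ρ |v⟩⟨v|) = (1 + ⟪b(v), r⟫) / 2` for
the Bloch vector `b(v)` of a unit vector `v`. Hence each member of a QPA on `ℂ²` confines `r` to
a plane, and consistency means that these planes meet inside the ball. The sections of the ball
are convex subsets of `ℝ³`, so by Helly's theorem any family whose subfamilies of size `4` are
consistent is consistent. Conversely the three coordinate planes together with a plane that
misses the origin but meets each coordinate axis inside the ball are consistent three at a time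
but not all together.
-/

open Matrix ComplexOrder

/-- One member `⟨B_k, S_k⟩` of a quantum probability assignment on `ℂⁿ`: an
orthonormal basis `vec` of `ℂⁿ` (whose rank-one projections form the measurement)
together with a probability distribution `prob` on the `n` outcomes. -/
structure Meas (n : ℕ) where
  vec : Fin n → (Fin n → ℂ)
  ortho : ∀ i j, dotProduct (star (vec i)) (vec j) = if i = j then 1 else 0
  prob : Fin n → ℝ
  prob_nonneg : ∀ i, 0 ≤ prob i
  prob_sum : ∑ i, prob i = 1

/-- The sub-family of the QPA `F` indexed by `G` is consistent: some density matrix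
(positive semidefinite, trace one) reproduces all the assigned probabilities. -/
def ConsistentOn {n m : ℕ} (F : Fin m → Meas n) (G : Finset (Fin m)) : Prop :=
  ∃ ρ : Matrix (Fin n) (Fin n) ℂ, ρ.PosSemidef ∧ ρ.trace = 1 ∧
    ∀ k ∈ G, ∀ i, (ρ * proj ((F k).vec i)).trace = ((F k).prob i : ℂ)


open Complex Finset ComplexConjugate
open scoped RealInnerProductSpace

lemma trace_mul_proj {n : ℕ} (A : Matrix (Fin n) (Fin n) ℂ) (v : Fin n → ℂ) :
    (A * proj v).trace = star v ⬝ᵥ (A *ᵥ v) := by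
  rw [proj, mul_vecMulVec, trace_vecMulVec, dotProduct_comm]

lemma sum_proj_eq_one_s13 {n : ℕ} (M : Meas n) : ∑ i, proj (M.vec i) = 1 := by
  set B : Matrix (Fin n) (Fin n) ℂ := Matrix.of fun i j => M.vec j i
  have hB : Bᴴ * B = 1 := by
    ext i j
    simpa [B, Matrix.mul_apply, dotProduct, Matrix.one_apply] using M.ortho i j
  calc ∑ i, proj (M.vec i) = B * Bᴴ := by
        ext i j
        simp [B, proj, Matrix.mul_apply, Matrix.sum_apply, vecMulVec_apply]
    _ = 1 := mul_eq_one_comm.mp hB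

/-- The matrix `(1 + r • σ) / 2`, where `σ` is the vector of Pauli matrices. -/
noncomputable def blochMatrix (r : EuclideanSpace ℝ (Fin 3)) : Matrix (Fin 2) (Fin 2) ℂ :=
  !![(1 + r 2) / 2, (r 0 - r 1 * I) / 2; (r 0 + r 1 * I) / 2, (1 - r 2) / 2]

/-- For a unit vector `x`, the Bloch vector of the pure state `proj x`. -/
noncomputable def blochVector (x : Fin 2 → ℂ) : EuclideanSpace ℝ (Fin 3) :=
  !₂[2 * (x 0 * conj (x 1)).re, -2 * (x 0 * conj (x 1)).im, normSq (x 0) - normSq (x 1)]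

lemma trace_blochMatrix (r : EuclideanSpace ℝ (Fin 3)) : (blochMatrix r).trace = 1 := by
  rw [blochMatrix, trace_fin_two_of]
  ring

lemma isHermitian_blochMatrix (r : EuclideanSpace ℝ (Fin 3)) : (blochMatrix r).IsHermitian := by
  ext i j
  fin_cases i <;> fin_cases j <;> simp [blochMatrix, Complex.ext_iff]

lemma det_blochMatrix (r : EuclideanSpace ℝ (Fin 3)) :
    (blochMatrix r).det = ((1 - ‖r‖ ^ 2) / 4 : ℝ) := by
  rw [blochMatrix, Matrix.det_fin_two_of, EuclideanSpace.norm_sq_eq]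
  simp only [Fin.sum_univ_three, Real.norm_eq_abs, sq_abs]
  push_cast
  linear_combination (r 1 : ℂ) ^ 2 / 4 * I_sq

lemma norm_blochVector (x : Fin 2 → ℂ) : ‖blochVector x‖ = normSq (x 0) + normSq (x 1) := by
  rw [← sq_eq_sq₀ (norm_nonneg _) (add_nonneg (normSq_nonneg _) (normSq_nonneg _)),
    EuclideanSpace.norm_sq_eq]
  simp only [blochVector, Fin.sum_univ_three, Real.norm_eq_abs, sq_abs, Matrix.cons_val, mul_re,
    mul_im, conj_re, conj_im, normSq_apply]
  ring

lemma star_dotProduct_blochMatrix_mulVec (r : EuclideanSpace ℝ (Fin 3)) (x : Fin 2 → ℂ) :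
    star x ⬝ᵥ (blochMatrix r *ᵥ x) =
      ((normSq (x 0) + normSq (x 1) + ⟪blochVector x, r⟫) / 2 : ℝ) := by
  simp [blochMatrix, blochVector, dotProduct, Matrix.mulVec, Fin.sum_univ_two, Fin.sum_univ_three,
    PiLp.inner_apply, Complex.ext_iff, normSq_apply]
  constructor <;> ring

lemma posSemidef_blochMatrix {r : EuclideanSpace ℝ (Fin 3)} (hr : ‖r‖ ≤ 1) :
    (blochMatrix r).PosSemidef := by
  refine posSemidef_iff_dotProduct_mulVec.mpr ⟨isHermitian_blochMatrix r, fun x => ?_⟩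
  rw [star_dotProduct_blochMatrix_mulVec, ← norm_blochVector, zero_le_real]
  have hinner : -‖blochVector x‖ ≤ ⟪blochVector x, r⟫ :=
    calc -‖blochVector x‖ ≤ -(‖blochVector x‖ * ‖r‖) := by
          gcongr; exact mul_le_of_le_one_right (norm_nonneg _) hr
      _ ≤ ⟪blochVector x, r⟫ := neg_le_of_abs_le (abs_real_inner_le_norm _ _)
  linarith

lemma exists_eq_blochMatrix {A : Matrix (Fin 2) (Fin 2) ℂ} (hA : A.IsHermitian)
    (htr : A.trace = 1) : ∃ r, A = blochMatrix r := by
  refine ⟨!₂[2 * (A 1 0).re, 2 * (A 1 0).im, (A 0 0).re - (A 1 1).re], ?_⟩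
  have h00 := hA.apply 0 0
  have h11 := hA.apply 1 1
  have h01 := hA.apply 0 1
  simp only [Matrix.trace, Fin.sum_univ_two, diag_apply, Complex.ext_iff, add_re, add_im, one_re,
    one_im, RCLike.star_def, conj_re, conj_im] at htr h00 h11 h01
  ext i j
  fin_cases i <;> fin_cases j <;> simp [blochMatrix, Complex.ext_iff] <;> constructor <;> linarith

theorem posSemidef_and_trace_eq_one_iff {A : Matrix (Fin 2) (Fin 2) ℂ} :
    A.PosSemidef ∧ A.trace = 1 ↔
      ∃ r : EuclideanSpace ℝ (Fin 3), ‖r‖ ≤ 1 ∧ A = blochMatrix r := by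
  constructor
  · rintro ⟨hA, htr⟩
    obtain ⟨r, rfl⟩ := exists_eq_blochMatrix hA.isHermitian htr
    have hdet := hA.det_nonneg
    rw [det_blochMatrix, zero_le_real] at hdet
    exact ⟨r, (sq_le_one_iff₀ (norm_nonneg r)).mp (by linarith), rfl⟩
  · rintro ⟨r, hr, rfl⟩
    exact ⟨posSemidef_blochMatrix hr, trace_blochMatrix r⟩

lemma normSq_add_normSq_eq_one (M : Meas 2) (i : Fin 2) :
    normSq (M.vec i 0) + normSq (M.vec i 1) = 1 := by
  have h := congrArg re (M.ortho i i)
  simpa [dotProduct, Fin.sum_univ_two, normSq_apply, mul_comm] using h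

lemma trace_blochMatrix_mul_proj (r : EuclideanSpace ℝ (Fin 3)) (M : Meas 2) (i : Fin 2) :
    (blochMatrix r * proj (M.vec i)).trace = ((1 + ⟪blochVector (M.vec i), r⟫) / 2 : ℝ) := by
  rw [trace_mul_proj, star_dotProduct_blochMatrix_mulVec, normSq_add_normSq_eq_one]

lemma trace_mul_proj_one {ρ : Matrix (Fin 2) (Fin 2) ℂ} (hρ : ρ.trace = 1) (M : Meas 2) :
    (ρ * proj (M.vec 1)).trace = 1 - (ρ * proj (M.vec 0)).trace := by
  have h := congrArg (fun P => (ρ * P).trace) (sum_proj_eq_one_s13 M)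
  simp only [Fin.sum_univ_two, mul_add, trace_add, mul_one, hρ] at h
  linear_combination h

lemma Meas.prob_one (M : Meas 2) : M.prob 1 = 1 - M.prob 0 := by
  linear_combination (by simpa [Fin.sum_univ_two] using M.prob_sum : M.prob 0 + M.prob 1 = 1)

lemma ConsistentOn.mono {n m : ℕ} {F : Fin m → Meas n} {G H : Finset (Fin m)}
    (h : ConsistentOn F H) (hGH : G ⊆ H) : ConsistentOn F G :=
  let ⟨ρ, hρ, htr, hprob⟩ := h
  ⟨ρ, hρ, htr, fun k hk => hprob k (hGH hk)⟩

theorem consistentOn_iff {m : ℕ} (F : Fin m → Meas 2) (G : Finset (Fin m)) :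
    ConsistentOn F G ↔ ∃ r : EuclideanSpace ℝ (Fin 3), ‖r‖ ≤ 1 ∧
      ∀ k ∈ G, ⟪blochVector ((F k).vec 0), r⟫ = 2 * (F k).prob 0 - 1 := by
  constructor
  · rintro ⟨ρ, hpsd, htr, hprob⟩
    obtain ⟨r, hr, rfl⟩ := posSemidef_and_trace_eq_one_iff.mp ⟨hpsd, htr⟩
    refine ⟨r, hr, fun k hk => ?_⟩
    have h := hprob k hk 0
    rw [trace_blochMatrix_mul_proj, ofReal_inj] at h
    linarith
  · rintro ⟨r, hr, hplane⟩
    refine ⟨blochMatrix r, posSemidef_blochMatrix hr, trace_blochMatrix r, fun k hk => ?_⟩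
    have h0 : (blochMatrix r * proj ((F k).vec 0)).trace = (F k).prob 0 := by
      rw [trace_blochMatrix_mul_proj, hplane k hk]
      push_cast
      ring
    refine Fin.forall_fin_two.mpr ⟨h0, ?_⟩
    rw [trace_mul_proj_one (trace_blochMatrix r), h0, Meas.prob_one]
    push_cast
    ring

theorem consistentOn_univ_of_forall_card_le_four {m : ℕ} (F : Fin m → Meas 2)
    (h : ∀ G : Finset (Fin m), #G ≤ 4 → ConsistentOn F G) : ConsistentOn F univ := by
  rcases (univ : Finset (Fin m)).eq_empty_or_nonempty with hempty | ⟨k₀, hk₀⟩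
  · exact hempty ▸ h ∅ (by simp)
  set S : Fin m → Set (EuclideanSpace ℝ (Fin 3)) := fun k =>
    Metric.closedBall 0 1 ∩ {r | ⟪blochVector ((F k).vec 0), r⟫ = 2 * (F k).prob 0 - 1}
  have hconvex : ∀ k ∈ univ, Convex ℝ (S k) := fun k _ =>
    (convex_closedBall 0 1).inter
      ((convex_singleton _).linear_preimage (innerSL ℝ (blochVector ((F k).vec 0))).toLinearMap)
  obtain ⟨r, hr⟩ : (⋂ k ∈ univ, S k).Nonempty := by
    refine Convex.helly_theorem' hconvex fun G _ hG => ?_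
    rw [finrank_euclideanSpace_fin] at hG
    obtain ⟨r, hr, hplane⟩ := (consistentOn_iff F G).mp (h G hG)
    exact ⟨r, Set.mem_iInter₂.mpr fun k hk => ⟨mem_closedBall_zero_iff.mpr hr, hplane k hk⟩⟩
  rw [Set.mem_iInter₂] at hr
  exact (consistentOn_iff F univ).mpr
    ⟨r, mem_closedBall_zero_iff.mp (hr k₀ hk₀).1, fun k hk => (hr k hk).2⟩

noncomputable def qubitMeas (v : Fin 2 → ℂ) (hv : normSq (v 0) + normSq (v 1) = 1) (p : ℝ)
    (hp₀ : 0 ≤ p) (hp₁ : p ≤ 1) : Meas 2 where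
  vec := ![v, ![-conj (v 1), conj (v 0)]]
  ortho := by
    simp only [Fin.forall_fin_two]
    simp [dotProduct, Fin.sum_univ_two, Complex.ext_iff, normSq_apply] at hv ⊢
    refine ⟨⟨⟨?_, ?_⟩, ?_, ?_⟩, ⟨?_, ?_⟩, ?_, ?_⟩ <;> linarith
  prob := ![p, 1 - p]
  prob_nonneg := Fin.forall_fin_two.mpr ⟨hp₀, sub_nonneg.mpr hp₁⟩
  prob_sum := by simp

/-- The Bloch vectors of the four bases are `e_z, e_x, -e_y` and `(4, -8, 1) / 9`, so the four
planes are `z = 0`, `x = 0`, `y = 0` and `4x - 8y + z = 1/2`: any three of them meet in a point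
of norm at most `1/2`, all four have no common point. -/
noncomputable def counterexample : Fin 4 → Meas 2 :=
  ![qubitMeas ![1, 0] (by simp) (1 / 2) (by norm_num) (by norm_num),
    qubitMeas ![(1 + I) / 2, (1 + I) / 2] (by norm_num [normSq_apply]) (1 / 2)
      (by norm_num) (by norm_num),
    qubitMeas ![(1 + I) / 2, (1 - I) / 2] (by norm_num [normSq_apply]) (1 / 2)
      (by norm_num) (by norm_num),
    qubitMeas ![(1 + 2 * I) / 3, 2 / 3] (by norm_num [normSq_apply]) (19 / 36)
      (by norm_num) (by norm_num)]

lemma blochVector_counterexample (k : Fin 4) : blochVector ((counterexample k).vec 0) =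
    ![!₂[0, 0, 1], !₂[1, 0, 0], !₂[0, -1, 0], !₂[4 / 9, -8 / 9, 1 / 9]] k := by
  ext i
  fin_cases k <;> fin_cases i <;>
    norm_num [counterexample, qubitMeas, blochVector, normSq_apply, Complex.div_re, Complex.div_im]

lemma counterexample_plane_iff (r : EuclideanSpace ℝ (Fin 3)) (k : Fin 4) :
    ⟪blochVector ((counterexample k).vec 0), r⟫ = 2 * (counterexample k).prob 0 - 1 ↔
      ![r 2 = 0, r 0 = 0, r 1 = 0, 4 * r 0 - 8 * r 1 + r 2 = 1 / 2] k := by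
  rw [blochVector_counterexample]
  fin_cases k <;> simp [counterexample, qubitMeas, PiLp.inner_apply, Fin.sum_univ_three]
  constructor <;> intro h <;> linarith

lemma counterexample_consistentOn_compl_singleton (j : Fin 4) :
    ConsistentOn counterexample {j}ᶜ := by
  rw [consistentOn_iff]
  refine ⟨![!₂[0, 0, 1 / 2], !₂[1 / 8, 0, 0], !₂[0, -1 / 16, 0], 0] j, ?_, fun k hk => ?_⟩
  · rw [← sq_le_one_iff₀ (norm_nonneg _), EuclideanSpace.norm_sq_eq]
    fin_cases j <;> norm_num [Fin.sum_univ_three, Matrix.cons_val_two]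
  · rw [counterexample_plane_iff]
    revert hk
    fin_cases j <;> fin_cases k <;> norm_num [Matrix.cons_val_two]

lemma counterexample_consistentOn_of_card_le_three {G : Finset (Fin 4)} (hG : #G ≤ 3) :
    ConsistentOn counterexample G := by
  obtain ⟨j, -, hj⟩ := exists_mem_notMem_of_card_lt_card (s := G) (t := univ)
    (by rw [card_univ, Fintype.card_fin]; omega)
  exact (counterexample_consistentOn_compl_singleton j).mono (subset_compl_singleton.mpr hj)

lemma not_consistentOn_counterexample : ¬ ConsistentOn counterexample univ := by
  rw [consistentOn_iff]
  rintro ⟨r, -, hplane⟩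
  have h k := (counterexample_plane_iff r k).mp (hplane k (mem_univ k))
  have hz : r 2 = 0 := h 0
  have hx : r 0 = 0 := h 1
  have hy : r 1 = 0 := h 2
  have h3 : 4 * r 0 - 8 * r 1 + r 2 = 1 / 2 := h 3
  linarith

/-- There is a quantum probability assignment on `ℂ²` of size `4` such that every
subset of size `3` is consistent while the whole family is not; consequently the
consistency number of a `2`-dimensional quantum system — the least `r` such that
consistency of all subsets of size (at most) `r` of any QPA implies consistency of
the whole QPA — equals `4`. -/
theorem consistency_number_eq_dim_two :
    (∃ F : Fin 4 → Meas 2,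
      (∀ G : Finset (Fin 4), G.card = 3 → ConsistentOn F G) ∧
      ¬ ConsistentOn F Finset.univ) ∧
    IsLeast {r : ℕ | ∀ (m : ℕ) (F : Fin m → Meas 2),
        (∀ G : Finset (Fin m), G.card ≤ r → ConsistentOn F G) →
          ConsistentOn F Finset.univ}
      4 := by
  refine ⟨⟨counterexample, fun G hG => counterexample_consistentOn_of_card_le_three hG.le,
    not_consistentOn_counterexample⟩, fun _ => consistentOn_univ_of_forall_card_le_four,
    fun r hr => ?_⟩
  by_contra! hr4
  exact not_consistentOn_counterexample
    (hr 4 counterexample fun G hG => counterexample_consistentOn_of_card_le_three (by omega))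
end
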